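/- Let k ≠ 0 and consider the immersion x(u,v) = e^{ku}(cos u cosh v, sin u cosh v, cos u sinh v, sin u sinh v) in ℝ⁴ with J₁(x₁,x₂,x₃,x₄) = (x₃,x₄,x₁,x₂) and g₁ = diag(1,1,-1,-1). At every point where the tangent plane W = span(∂x/∂u, ∂x/∂v) is nondegenerate, the tangential endomorphism P satisfies P² = (k²/(1+k²))·Id on W. -/

import Mathlib

def J1 (v : Fin 4 → ℝ) : Fin 4 → ℝ := ![v 2, v 3, v 0, v 1]

def g1 (v w : Fin 4 → ℝ) : ℝ := v 0 * w 0 + v 1 * w 1 - v 2 * w 2 - v 3 * w 3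

theorem stmt_14 (k : ℝ) (hk : k ≠ 0) (u v : ℝ) (W : Submodule ℝ (Fin 4 → ℝ))
    (hW : W = Submodule.span ℝ
      {![Real.exp (k * u) * (k * Real.cos u - Real.sin u) * Real.cosh v,
         Real.exp (k * u) * (k * Real.sin u + Real.cos u) * Real.cosh v,
         Real.exp (k * u) * (k * Real.cos u - Real.sin u) * Real.sinh v,
         Real.exp (k * u) * (k * Real.sin u + Real.cos u) * Real.sinh v],
       ![Real.exp (k * u) * Real.cos u * Real.sinh v,
         Real.exp (k * u) * Real.sin u * Real.sinh v,
         Real.exp (k * u) * Real.cos u * Real.cosh v,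
         Real.exp (k * u) * Real.sin u * Real.cosh v]})
    (hWnondeg : ∀ w ∈ W, (∀ w' ∈ W, g1 w w' = 0) → w = 0)
    (P : (Fin 4 → ℝ) → (Fin 4 → ℝ))
    (hPW : ∀ x ∈ W, P x ∈ W)
    (horth : ∀ x ∈ W, ∀ w ∈ W, g1 (J1 x - P x) w = 0) :
    ∀ x ∈ W, P (P x) = (k ^ 2 / (1 + k ^ 2)) • x := by
  have hcs : Real.sin u ^ 2 + Real.cos u ^ 2 = 1 := Real.sin_sq_add_cos_sq u
  have hch : Real.cosh v ^ 2 - Real.sinh v ^ 2 = 1 := Real.cosh_sq_sub_sinh_sq v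
  have hk2 : 1 + k ^ 2 ≠ 0 := by positivity
  set E := Real.exp (k * u) with hE
  set cu := Real.cos u with hcu
  set su := Real.sin u with hsu
  set cv := Real.cosh v with hcv
  set sv := Real.sinh v with hsv
  set e1 : Fin 4 → ℝ :=
    ![E * (k * cu - su) * cv, E * (k * su + cu) * cv,
      E * (k * cu - su) * sv, E * (k * su + cu) * sv] with he1
  set e2 : Fin 4 → ℝ :=
    ![E * cu * sv, E * su * sv, E * cu * cv, E * su * cv] with he2
  -- membership lemmas
  have he1W : e1 ∈ W := by
    rw [hW]; exact Submodule.subset_span (by simp)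
  have he2W : e2 ∈ W := by
    rw [hW]; exact Submodule.subset_span (by simp)
  -- bilinearity of g1
  have gsub : ∀ p q w : Fin 4 → ℝ, g1 (p - q) w = g1 p w - g1 q w := by
    intro p q w; simp [g1, Pi.sub_apply]; ring
  have gaddl : ∀ p q w : Fin 4 → ℝ, g1 (p + q) w = g1 p w + g1 q w := by
    intro p q w; simp [g1, Pi.add_apply]; ring
  have gsmull : ∀ (t : ℝ) (p w : Fin 4 → ℝ), g1 (t • p) w = t * g1 p w := by
    intro t p w; simp [g1, Pi.smul_apply, smul_eq_mul]; ring
  have gaddr : ∀ p q w : Fin 4 → ℝ, g1 w (p + q) = g1 w p + g1 w q := by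
    intro p q w; simp [g1, Pi.add_apply]; ring
  have gsmulr : ∀ (t : ℝ) (p w : Fin 4 → ℝ), g1 w (t • p) = t * g1 w p := by
    intro t p w; simp [g1, Pi.smul_apply, smul_eq_mul]; ring
  -- linearity of J1
  have J1add : ∀ p q : Fin 4 → ℝ, J1 (p + q) = J1 p + J1 q := by
    intro p q; funext i; fin_cases i <;> simp [J1]
  have J1smul : ∀ (t : ℝ) (p : Fin 4 → ℝ), J1 (t • p) = t • J1 p := by
    intro t p; funext i; fin_cases i <;> simp [J1]
  -- the eight scalar products
  have A1 : g1 (J1 e1) e1 = 0 := by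
    simp [g1, J1, he1]; ring
  have A2 : g1 (J1 e1) e2 = -(E ^ 2 * k) := by
    simp only [g1, J1, he1, he2, Matrix.cons_val_zero, Matrix.cons_val_one,
      Matrix.head_cons, Matrix.cons_val_two, Matrix.tail_cons, Matrix.cons_val_three]
    linear_combination E ^ 2 * k * (sv ^ 2 - cv ^ 2) * hcs - E ^ 2 * k * hch
  have A3 : g1 (J1 e2) e1 = E ^ 2 * k := by
    simp only [g1, J1, he1, he2, Matrix.cons_val_zero, Matrix.cons_val_one,
      Matrix.head_cons, Matrix.cons_val_two, Matrix.tail_cons, Matrix.cons_val_three]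
    linear_combination E ^ 2 * k * (cv ^ 2 - sv ^ 2) * hcs + E ^ 2 * k * hch
  have A4 : g1 (J1 e2) e2 = 0 := by
    simp [g1, J1, he2]; ring
  have B1 : g1 e1 e1 = E ^ 2 * (1 + k ^ 2) := by
    simp only [g1, he1, Matrix.cons_val_zero, Matrix.cons_val_one,
      Matrix.head_cons, Matrix.cons_val_two, Matrix.tail_cons, Matrix.cons_val_three]
    linear_combination E ^ 2 * (k ^ 2 + 1) * (cv ^ 2 - sv ^ 2) * hcs + E ^ 2 * (k ^ 2 + 1) * hch
  have B2 : g1 e1 e2 = 0 := by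
    simp [g1, he1, he2]; ring
  have B3 : g1 e2 e1 = 0 := by
    simp [g1, he1, he2]; ring
  have B4 : g1 e2 e2 = -E ^ 2 := by
    simp only [g1, he2, Matrix.cons_val_zero, Matrix.cons_val_one,
      Matrix.head_cons, Matrix.cons_val_two, Matrix.tail_cons, Matrix.cons_val_three]
    linear_combination E ^ 2 * (sv ^ 2 - cv ^ 2) * hcs - E ^ 2 * hch
  -- the key formula for P
  have hPformula : ∀ a b : ℝ,
      P (a • e1 + b • e2) = (b * k / (1 + k ^ 2)) • e1 + (a * k) • e2 := by
    intro a b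
    set x := a • e1 + b • e2 with hx
    set y := (b * k / (1 + k ^ 2)) • e1 + (a * k) • e2 with hy
    have hxW : x ∈ W := W.add_mem (W.smul_mem _ he1W) (W.smul_mem _ he2W)
    have hyW : y ∈ W := W.add_mem (W.smul_mem _ he1W) (W.smul_mem _ he2W)
    have hsubW : P x - y ∈ W := W.sub_mem (hPW x hxW) hyW
    have hzero : ∀ w ∈ W, g1 (P x - y) w = 0 := by
      intro w hw
      have h1 : g1 (J1 x - P x) w = 0 := horth x hxW w hw
      have h2 : g1 (J1 x - y) w = 0 := by
        rw [hW, Submodule.mem_span_pair] at hw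
        obtain ⟨c, d, rfl⟩ := hw
        rw [hx, hy, J1add, J1smul, J1smul]
        rw [gsub]
        rw [gaddr, gsmulr, gsmulr, gaddr, gsmulr, gsmulr]
        rw [gaddl, gsmull, gsmull, gaddl, gsmull, gsmull,
            gaddl, gsmull, gsmull, gaddl, gsmull, gsmull]
        rw [A1, A2, A3, A4, B1, B2, B3, B4]
        field_simp
        ring
      have h3 : g1 (P x - y) w = g1 (J1 x - y) w - g1 (J1 x - P x) w := by
        rw [gsub, gsub, gsub]; ring
      rw [h3, h1, h2]; ring
    have := hWnondeg _ hsubW hzero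
    exact sub_eq_zero.mp this
  -- conclude
  intro x hx
  rw [hW, Submodule.mem_span_pair] at hx
  obtain ⟨a, b, rfl⟩ := hx
  rw [hPformula a b, hPformula (b * k / (1 + k ^ 2)) (a * k)]
  rw [smul_add, smul_smul, smul_smul]
  congr 1
  · congr 1; field_simp
  · congr 1; field_simp
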